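/- Let X be a locally compact, σ-compact metrizable topological space and let f : X → X be a homeomorphism whose induced ℤ-action n·x = fⁿ(x) is metric-independent expansive (MIE). Then for every integer n ≠ 0, the ℤ-action generated by fⁿ (i.e. m·x = f^{nm}(x)) is metric-independent expansive. -/

import Mathlib

/-!
Pull back a metric of the one-point compactification `OnePoint X` (metrizable, since `X` is
second countable) to a compatible metric `d∞` on `X`. For any compatible metric `d`, every
`↑ ∘ f^j : (X, d) → OnePoint X` is continuous and tends to `∞` at infinity, hence uniformly
continuous. So if `c` is an expansive constant of `f` for `d∞`, there is `δ > 0` such that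
`d x y < δ` forces `d∞ (f^j x) (f^j y) < c` for all `0 ≤ j < |n|`; writing `k = j + n q` shows
that `δ / 2` is an expansive constant of `f^n` for `d`.
-/

/-- An action `φ` is expansive with respect to a distance function `d`. -/
def ExpansiveWith {G X : Type*} (φ : G → X → X) (d : X → X → ℝ) : Prop :=
  ∃ c > 0, ∀ x y : X, x ≠ y → ∃ g : G, c < d (φ g x) (φ g y)

/-- Metric-independent expansiveness: expansive with respect to every metric
compatible with the topology. -/
def MIE {G X : Type*} [tX : TopologicalSpace X] (φ : G → X → X) : Prop :=
  ∀ m : MetricSpace X, m.toUniformSpace.toTopologicalSpace = tX →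
    ExpansiveWith φ (fun x y => @dist X m.toDist x y)

open Set Filter Topology TopologicalSpace Uniformity

instance OnePoint.secondCountableTopology {X : Type*} [TopologicalSpace X]
    [SecondCountableTopology X] [LocallyCompactSpace X] [T2Space X] :
    SecondCountableTopology (OnePoint X) := by
  obtain ⟨B, hBc, -, hB⟩ := exists_countable_basis X
  let K := CompactExhaustion.choice X
  let basis : Set (Set (OnePoint X)) :=
    image ((↑) : X → OnePoint X) '' B ∪ range fun n => ((↑) '' K n)ᶜ
  refine (isTopologicalBasis_of_isOpen_of_nhds (s := basis) ?_ ?_).secondCountableTopology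
    ((hBc.image _).union (countable_range _))
  · rintro _ (⟨U, hU, rfl⟩ | ⟨n, rfl⟩)
    · exact OnePoint.isOpen_image_coe.2 (hB.isOpen hU)
    · exact OnePoint.isOpen_compl_image_coe.2 ⟨(K.isCompact n).isClosed, K.isCompact n⟩
  · rintro (_ | x) u hu hu_open
    · obtain ⟨-, hcompact⟩ := (OnePoint.isOpen_iff_of_mem hu).1 hu_open
      obtain ⟨n, hn⟩ := K.exists_superset_of_isCompact hcompact
      refine ⟨_, Or.inr ⟨n, rfl⟩, OnePoint.infty_notMem_image_coe, ?_⟩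
      rintro (_ | y) hy
      · exact hu
      · by_contra hyu
        exact hy (mem_image_of_mem _ (hn hyu))
    · obtain ⟨U, hUB, hxU, hUu⟩ :=
        hB.exists_subset_of_mem_open hu (hu_open.preimage OnePoint.continuous_coe)
      exact ⟨_, Or.inl (mem_image_of_mem _ hUB), mem_image_of_mem _ hxU, image_subset_iff.2 hUu⟩

lemma OnePoint.tendsto_coe_cocompact {X : Type*} [TopologicalSpace X] :
    Tendsto ((↑) : X → OnePoint X) (cocompact X) (𝓝 OnePoint.infty) :=
  OnePoint.tendsto_coe_infty.mono_left cocompact_le_coclosedCompact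

theorem ExpansiveWith.zpow_mul_of_uniformContinuous {X Y : Type*}
    [PseudoMetricSpace X] [PseudoMetricSpace Y]
    {T : Equiv.Perm X} {e : X → Y}
    (hexp : ExpansiveWith (fun (k : ℤ) x => (T ^ k) x) fun x y => dist (e x) (e y))
    {n : ℤ} (hn : n ≠ 0) (huc : ∀ j < n.natAbs, UniformContinuous (e ∘ ⇑(T ^ j))) :
    ExpansiveWith (fun (m : ℤ) x => (T ^ (n * m)) x) dist := by
  obtain ⟨c, hc, hsep⟩ := hexp
  have hmem : (⋂ j < n.natAbs, {p : X × X | dist (e ((T ^ j) p.1)) (e ((T ^ j) p.2)) < c})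
      ∈ 𝓤 X :=
    (biInter_mem (finite_lt_nat _)).2 fun j hj => huc j hj (Metric.dist_mem_uniformity hc)
  obtain ⟨δ, hδ, hδmem⟩ := Metric.mem_uniformity_dist.1 hmem
  refine ⟨δ / 2, half_pos hδ, fun x y hxy => ?_⟩
  by_contra! hclose
  obtain ⟨k, hk⟩ := hsep x y hxy
  obtain ⟨j, hj⟩ := Int.eq_ofNat_of_zero_le (Int.emod_nonneg k hn)
  have hjn : j < n.natAbs := by have := Int.emod_lt k hn; omega
  have hsplit : T ^ k = T ^ j * T ^ (n * (k / n)) := by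
    rw [← zpow_natCast, ← hj, ← zpow_add, Int.emod_add_mul_ediv]
  refine hk.not_gt ?_
  simp only [hsplit, Equiv.Perm.mul_apply]
  exact mem_iInter₂.1 (hδmem ((hclose (k / n)).trans_lt (half_lt_self hδ))) j hjn

/-- If `f` is a homeomorphism of a locally compact, σ-compact metrizable space `X`
whose induced `ℤ`-action `k ⬝ x = f^k x` is metric-independent expansive, then for
every `n ≠ 0` the `ℤ`-action generated by `f^n` (i.e. `m ⬝ x = f^(n*m) x`) is
metric-independent expansive. -/
theorem mie_power {X : Type*} [TopologicalSpace X] [TopologicalSpace.MetrizableSpace X]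
    [LocallyCompactSpace X] [SigmaCompactSpace X] (f : X ≃ₜ X)
    (hmie : MIE (fun (k : ℤ) (x : X) => (f.toEquiv ^ k) x))
    (n : ℤ) (hn : n ≠ 0) :
    MIE (fun (m : ℤ) (x : X) => (f.toEquiv ^ (n * m)) x) := by
  intro m hm
  let _ : MetricSpace X := m.replaceTopology hm.symm
  let _ : MetricSpace (OnePoint X) := metrizableSpaceMetric (OnePoint X)
  have hexp := hmie (OnePoint.isOpenEmbedding_coe.isEmbedding.comapMetricSpace _) rfl
  refine hexp.zpow_mul_of_uniformContinuous hn fun j _ => ?_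
  rw [Equiv.Perm.coe_pow]
  exact Continuous.uniformContinuous_of_tendsto_cocompact
    (OnePoint.continuous_coe.comp (f.continuous.iterate j))
    (OnePoint.tendsto_coe_cocompact.comp (f.isClosedEmbedding.tendsto_cocompact.iterate j))
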